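/- arXiv:2501.13909 — 3 statements merged into one kernel-verified Lean document; each statement's English description precedes it below -/
import Mathlib

section
/- Let (X, φ) and (Y, f) be expansive dynamical systems, let π : (X, φ) → (Y, f) be a u-resolving factor map, let P ⊆ Y be a finite set of periodic points such that π^{-1}(p) is a single point for each p ∈ P, and let Q = π^{-1}(P). Then for each y ∈ Y^u(P), the full preimage π^{-1}(y) consists of a single point x, and moreover x ∈ X^u(Q). -/
open Filter Topology Set

/-- The local stable set `X^s(x, ε)` of an invertible dynamical system. -/
def stableSet {X : Type*} [MetricSpace X] (φ : Equiv.Perm X) (x : X) (ε : ℝ) : Set X :=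
  {y | ∀ n : ℕ, dist ((φ ^ n) x) ((φ ^ n) y) < ε}

/-- The local unstable set `X^u(x, ε)` of an invertible dynamical system. -/
def unstableSet {X : Type*} [MetricSpace X] (φ : Equiv.Perm X) (x : X) (ε : ℝ) : Set X :=
  {y | ∀ n : ℕ, dist ((φ⁻¹ ^ n) x) ((φ⁻¹ ^ n) y) < ε}

/-- Stable equivalence: `d(φⁿ x, φⁿ y) → 0` as `n → ∞`. -/
def StablyEq {X : Type*} [MetricSpace X] (φ : Equiv.Perm X) (x y : X) : Prop :=
  Tendsto (fun n : ℕ => dist ((φ ^ n) x) ((φ ^ n) y)) atTop (𝓝 0)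

/-- Unstable equivalence: `d(φ⁻ⁿ x, φ⁻ⁿ y) → 0` as `n → ∞`. -/
def UnstablyEq {X : Type*} [MetricSpace X] (φ : Equiv.Perm X) (x y : X) : Prop :=
  Tendsto (fun n : ℕ => dist ((φ⁻¹ ^ n) x) ((φ⁻¹ ^ n) y)) atTop (𝓝 0)

/-- Expansiveness with expansiveness constant `εX`. -/
def Expansive {X : Type*} [MetricSpace X] (φ : Equiv.Perm X) (εX : ℝ) : Prop :=
  ∀ x y : X, (∀ n : ℤ, dist ((φ ^ n) x) ((φ ^ n) y) ≤ εX) → x = y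

/-- A periodic point: `φⁿ p = p` for some `n ≥ 1`. -/
def IsPeriodicPoint {X : Type*} (φ : Equiv.Perm X) (p : X) : Prop :=
  ∃ n : ℕ, 1 ≤ n ∧ (φ ^ n) p = p

private lemma perm_pow_cont {X : Type*} [TopologicalSpace X] (g : Equiv.Perm X)
    (h : Continuous g) (n : ℕ) : Continuous ((g ^ n : Equiv.Perm X) : X → X) := by
  induction n with
  | zero => simpa using continuous_id
  | succ n ih =>
      have he : ((g ^ (n + 1) : Equiv.Perm X) : X → X) = (g ^ n : Equiv.Perm X) ∘ g := by
        funext z; simp [pow_succ, Equiv.Perm.mul_apply]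
      rw [he]; exact ih.comp h

private lemma perm_fix_pow {X : Type*} (g : Equiv.Perm X) {q : X} (h : g q = q) (j : ℕ) :
    (g ^ j) q = q := by
  induction j with
  | zero => simp
  | succ j ih => rw [pow_succ, Equiv.Perm.mul_apply, h, ih]

private lemma comm_pow {X Y : Type*} (φ : Equiv.Perm X) (f : Equiv.Perm Y) (π : X → Y)
    (hπf : ∀ x : X, π (φ x) = f (π x)) (n : ℕ) (x : X) :
    π ((φ ^ n) x) = (f ^ n) (π x) := by
  induction n generalizing x with
  | zero => simp
  | succ n ih => rw [pow_succ, pow_succ, Equiv.Perm.mul_apply, Equiv.Perm.mul_apply, ih, hπf]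

private lemma comm_inv_pow {X Y : Type*} (φ : Equiv.Perm X) (f : Equiv.Perm Y) (π : X → Y)
    (hπf : ∀ x : X, π (φ x) = f (π x)) (n : ℕ) (x : X) :
    π ((φ⁻¹ ^ n) x) = (f⁻¹ ^ n) (π x) := by
  have h1 : ∀ z : X, π (φ⁻¹ z) = f⁻¹ (π z) := by
    intro z
    apply f.injective
    have : f (π (φ⁻¹ z)) = π (φ (φ⁻¹ z)) := (hπf _).symm
    rw [this]
    simp [Equiv.Perm.inv_def]
  induction n generalizing x with
  | zero => simp
  | succ n ih => rw [pow_succ, pow_succ, Equiv.Perm.mul_apply, Equiv.Perm.mul_apply, ih, h1]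

/-- if `π` is a u-resolving factor map and `P` is a finite set of
periodic points each with a singleton fiber, then every point of `Y^u(P)` has a
singleton full preimage, and that preimage lies in `X^u(π⁻¹(P))`. -/
theorem preimage_singleton_of_unstable_class_of_periodic
    {X Y : Type*} [MetricSpace X] [CompactSpace X] [MetricSpace Y] [CompactSpace Y]
    (φ : Equiv.Perm X) (hφ : Continuous φ) (hφ' : Continuous φ.symm)
    (f : Equiv.Perm Y) (hf : Continuous f) (hf' : Continuous f.symm)
    (εX εY : ℝ) (hεX : 0 < εX) (hεY : 0 < εY)
    (hexpX : Expansive φ εX) (hexpY : Expansive f εY)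
    (π : X → Y) (hπc : Continuous π) (hπs : Function.Surjective π)
    (hπf : ∀ x : X, π (φ x) = f (π x))
    (hures : ∀ x₁ x₂ : X, UnstablyEq φ x₁ x₂ → π x₁ = π x₂ → x₁ = x₂)
    (P : Set Y) (hPfin : P.Finite)
    (hPper : ∀ p ∈ P, IsPeriodicPoint f p)
    (hPfib : ∀ p ∈ P, ∃ x : X, π ⁻¹' {p} = {x}) :
    ∀ y : Y, (∃ p ∈ P, UnstablyEq f p y) →
      ∃ x : X, π ⁻¹' {y} = {x} ∧ ∃ q ∈ π ⁻¹' P, UnstablyEq φ q x := by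
  intro y hy
  obtain ⟨p, hpP, hpy⟩ := hy
  obtain ⟨q, hq⟩ := hPfib p hpP
  have hqp : π q = p := by
    have : q ∈ π ⁻¹' {p} := by rw [hq]; exact rfl
    exact this
  obtain ⟨k, hk1, hkp⟩ := hPper p hpP
  have hk0 : 0 < k := hk1
  have hφinv_cont : Continuous ((φ⁻¹ : Equiv.Perm X) : X → X) := by
    rw [Equiv.Perm.inv_def]; exact hφ'
  -- q is periodic with period k
  have hqk : (φ ^ k) q = q := by
    have hm : (φ ^ k) q ∈ π ⁻¹' {p} := by
      have : π ((φ ^ k) q) = (f ^ k) (π q) := comm_pow φ f π hπf k q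
      simp [Set.mem_preimage, this, hqp, hkp]
    rw [hq] at hm
    exact hm
  have hqkinv : (φ⁻¹ ^ k) q = q := by
    rw [inv_pow]
    apply (φ ^ k).injective
    simp [hqk]
  have hpkinv : (f⁻¹ ^ k) p = p := by
    rw [inv_pow]
    apply (f ^ k).injective
    simp [hkp]
  -- multiples of k fix q and p
  have hqfix : ∀ j : ℕ, (φ⁻¹ ^ (k * j)) q = q := by
    intro j; rw [pow_mul]; exact perm_fix_pow _ hqkinv j
  have hpfix : ∀ j : ℕ, (f⁻¹ ^ (k * j)) p = p := by
    intro j; rw [pow_mul]; exact perm_fix_pow _ hpkinv j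
  -- convergence of dist p (f⁻¹^{k n} y) to 0
  have hmulT : Tendsto (fun n : ℕ => k * n) atTop atTop := by
    apply tendsto_atTop_atTop.2
    intro b
    exact ⟨b, fun m hm => le_trans hm (Nat.le_mul_of_pos_left m hk0)⟩
  have hpy2 : Tendsto (fun n : ℕ => dist p ((f⁻¹ ^ (k * n)) y)) atTop (𝓝 0) := by
    have h := hpy.comp hmulT
    have heq : ((fun n : ℕ => dist ((f⁻¹ ^ n) p) ((f⁻¹ ^ n) y)) ∘ fun n : ℕ => k * n)
        = fun n : ℕ => dist p ((f⁻¹ ^ (k * n)) y) := by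
      funext n
      simp only [Function.comp_apply, hpfix]
    rwa [heq] at h
  -- the key claim: every preimage of y is unstably equivalent to q
  have key : ∀ x : X, π x = y → UnstablyEq φ q x := by
    intro x hx
    -- Step A : φ⁻¹^{k n} x → q
    have tendq : Tendsto (fun n : ℕ => (φ⁻¹ ^ (k * n)) x) atTop (𝓝 q) := by
      apply tendsto_of_subseq_tendsto
      intro ns hns
      obtain ⟨z, -, ms, hms, hmt⟩ :=
        (isCompact_univ : IsCompact (Set.univ : Set X)).tendsto_subseq
          (x := fun n => (φ⁻¹ ^ (k * ns n)) x) (fun n => Set.mem_univ _)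
      refine ⟨ms, ?_⟩
      -- show z = q
      have hπz : π z = p := by
        have h1 : Tendsto (fun n => π ((φ⁻¹ ^ (k * ns (ms n))) x)) atTop (𝓝 (π z)) :=
          (hπc.tendsto z).comp hmt
        have h2 : Tendsto (fun n => π ((φ⁻¹ ^ (k * ns (ms n))) x)) atTop (𝓝 p) := by
          have heq : (fun n => π ((φ⁻¹ ^ (k * ns (ms n))) x))
              = fun n => (f⁻¹ ^ (k * ns (ms n))) y := by
            funext n; rw [comm_inv_pow φ f π hπf, hx]
          rw [heq]
          rw [tendsto_iff_dist_tendsto_zero]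
          have hcomp : Tendsto (fun n => ns (ms n)) atTop atTop :=
            hns.comp hms.tendsto_atTop
          have h5 := hpy2.comp hcomp
          have heq2 : ((fun n : ℕ => dist p ((f⁻¹ ^ (k * n)) y)) ∘ fun n => ns (ms n))
              = fun n => dist ((f⁻¹ ^ (k * ns (ms n))) y) p := by
            funext n; simp only [Function.comp_apply, dist_comm]
          rwa [heq2] at h5
        exact tendsto_nhds_unique h1 h2
      have hz : z = q := by
        have : z ∈ π ⁻¹' {p} := by simp [Set.mem_preimage, hπz]
        rw [hq] at this; exact this
      rw [← hz]
      exact hmt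
    -- Step B : full convergence via residues
    have hFcont : Continuous (fun z : X =>
        ∑ r ∈ Finset.range k, dist ((φ⁻¹ ^ r) q) ((φ⁻¹ ^ r) z)) := by
      apply continuous_finset_sum
      intro r _
      exact Continuous.dist continuous_const (perm_pow_cont _ hφinv_cont r)
    have hFq : (∑ r ∈ Finset.range k, dist ((φ⁻¹ ^ r) q) ((φ⁻¹ ^ r) q)) = 0 := by
      simp
    have hdivT : Tendsto (fun m : ℕ => m / k) atTop atTop := by
      apply tendsto_atTop_atTop.2
      intro b
      exact ⟨b * k, fun m hm => (Nat.le_div_iff_mul_le hk0).2 hm⟩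
    have htend2 : Tendsto (fun m : ℕ =>
        ∑ r ∈ Finset.range k, dist ((φ⁻¹ ^ r) q) ((φ⁻¹ ^ r) ((φ⁻¹ ^ (k * (m / k))) x)))
        atTop (𝓝 0) := by
      have h1 : Tendsto (fun m : ℕ => (φ⁻¹ ^ (k * (m / k))) x) atTop (𝓝 q) :=
        tendq.comp hdivT
      have h2 := (hFcont.tendsto q).comp h1
      rw [hFq] at h2
      exact h2
    have hbound : ∀ m : ℕ, dist ((φ⁻¹ ^ m) q) ((φ⁻¹ ^ m) x)
        ≤ ∑ r ∈ Finset.range k, dist ((φ⁻¹ ^ r) q) ((φ⁻¹ ^ r) ((φ⁻¹ ^ (k * (m / k))) x)) := by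
      intro m
      have hsplit : (φ⁻¹ ^ m : Equiv.Perm X) = φ⁻¹ ^ (m % k) * φ⁻¹ ^ (k * (m / k)) := by
        rw [← pow_add, Nat.mod_add_div m k]
      have hql : (φ⁻¹ ^ m) q = (φ⁻¹ ^ (m % k)) q := by
        rw [hsplit, Equiv.Perm.mul_apply, hqfix]
      have hxl : (φ⁻¹ ^ m) x = (φ⁻¹ ^ (m % k)) ((φ⁻¹ ^ (k * (m / k))) x) := by
        rw [hsplit, Equiv.Perm.mul_apply]
      rw [hql, hxl]
      exact Finset.single_le_sum (f := fun r : ℕ => dist ((φ⁻¹ ^ r) q) ((φ⁻¹ ^ r) ((φ⁻¹ ^ (k * (m / k))) x))) (fun r _ => dist_nonneg)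
        (Finset.mem_range.2 (Nat.mod_lt m hk0))
    exact squeeze_zero (fun m => dist_nonneg) hbound htend2
  -- conclusion
  obtain ⟨x, hx⟩ := hπs y
  refine ⟨x, ?_, q, ?_, key x hx⟩
  · ext x'
    simp only [Set.mem_preimage, Set.mem_singleton_iff]
    constructor
    · intro hx'
      apply hures x' x _ (by rw [hx', hx])
      have h1 := key x hx
      have h2 := key x' hx'
      have h3 : ∀ m : ℕ, dist ((φ⁻¹ ^ m) x') ((φ⁻¹ ^ m) x)
          ≤ dist ((φ⁻¹ ^ m) q) ((φ⁻¹ ^ m) x') + dist ((φ⁻¹ ^ m) q) ((φ⁻¹ ^ m) x) := by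
        intro m
        rw [dist_comm ((φ⁻¹ ^ m) q) ((φ⁻¹ ^ m) x')]
        exact dist_triangle _ _ _
      have h4 : Tendsto (fun m : ℕ => dist ((φ⁻¹ ^ m) q) ((φ⁻¹ ^ m) x')
          + dist ((φ⁻¹ ^ m) q) ((φ⁻¹ ^ m) x)) atTop (𝓝 0) := by
        simpa using h2.add h1
      exact squeeze_zero (fun m => dist_nonneg) h3 h4
    · intro hx'; rw [hx', hx]
  · simpa [Set.mem_preimage, hqp] using hpP
end

section
/- Let (X, φ) and (Y, f) be expansive dynamical systems with expansiveness constants ε_X and ε_Y, and let π : (X, φ) → (Y, f) be a factor map. Suppose ε_π > 0 is such that for all x₁, x₂ ∈ X with d(x₁, x₂) < ε_π one has (x₁, x₂) ∈ D_{ε_X/2}(X), (π(x₁), π(x₂)) ∈ D_{ε_Y/2}(Y), and π([x₁, x₂]) = [π(x₁), π(x₂)]. Let y₁, y₂ ∈ Y and x₁, x₂ ∈ X be such that π^{-1}(y₁) = {x₁} and π^{-1}(y₂) = {x₂}. If there exists N ∈ ℕ with f^N(y₂) ∈ Y^s(f^N(y₁), ε_Y/2) and d(φ^N(x₁), φ^N(x₂))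 < ε_π, then φ^N(x₂) ∈ X^s(φ^N(x₁), ε_X/2); in particular x₁ ∼_s x₂. -/
open Filter Topology Set

section Aux

variable {X : Type*} [MetricSpace X]

lemma cont_perm_pow (φ : Equiv.Perm X) (hφ : Continuous φ) (n : ℕ) :
    Continuous (φ ^ n : Equiv.Perm X) := by
  induction n with
  | zero => simpa using continuous_id
  | succ k ih =>
    have : ⇑(φ ^ (k+1)) = ⇑(φ ^ k) ∘ ⇑φ := by
      rw [pow_succ]; rfl
    rw [this]; exact ih.comp hφ

lemma cont_perm_zpow (φ : Equiv.Perm X) (hφ : Continuous φ) (hφ' : Continuous φ.symm)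
    (m : ℤ) : Continuous (φ ^ m : Equiv.Perm X) := by
  obtain ⟨n, rfl | rfl⟩ := m.eq_nat_or_neg
  · rw [zpow_natCast]; exact cont_perm_pow φ hφ n
  · rw [zpow_neg, zpow_natCast, ← inv_pow]
    exact cont_perm_pow φ⁻¹ hφ' n

lemma stable_tendsto [CompactSpace X]
    (φ : Equiv.Perm X) (hφ : Continuous φ) (hφ' : Continuous φ.symm)
    (εX : ℝ) (hεX : 0 < εX) (hexp : Expansive φ εX)
    (x y : X) (h : y ∈ stableSet φ x (εX / 2)) :
    Tendsto (fun n : ℕ => dist ((φ ^ n) x) ((φ ^ n) y)) atTop (𝓝 0) := by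
  by_contra hcon
  rw [Metric.tendsto_atTop] at hcon
  push_neg at hcon
  obtain ⟨δ, hδ, hfreq⟩ := hcon
  have hfreq' : ∃ᶠ n in atTop, δ ≤ dist ((φ ^ n) x) ((φ ^ n) y) := by
    rw [frequently_atTop]
    intro N
    obtain ⟨n, hn, hd⟩ := hfreq N
    refine ⟨n, hn, ?_⟩
    rw [Real.dist_eq, sub_zero, abs_of_nonneg dist_nonneg] at hd; exact hd
  obtain ⟨ψ, hψmono, hψ⟩ := Filter.extraction_of_frequently_atTop hfreq'
  set u : ℕ → X × X := fun k => ((φ ^ ψ k) x, (φ ^ ψ k) y) with hu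
  obtain ⟨p, -, σ, hσmono, hσlim⟩ :=
    isCompact_univ.tendsto_subseq (fun k => Set.mem_univ (u k))
  have hkey : ∀ m : ℤ, dist ((φ ^ m) p.1) ((φ ^ m) p.2) ≤ εX := by
    intro m
    have hg : Continuous (fun q : X × X => dist ((φ ^ m) q.1) ((φ ^ m) q.2)) :=
      ((cont_perm_zpow φ hφ hφ' m).comp continuous_fst).dist
        ((cont_perm_zpow φ hφ hφ' m).comp continuous_snd)
    have hT : Tendsto (fun k => dist ((φ ^ m) (u (σ k)).1) ((φ ^ m) (u (σ k)).2))
        atTop (𝓝 (dist ((φ ^ m) p.1) ((φ ^ m) p.2))) :=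
      (hg.tendsto p).comp hσlim
    have hb : ∀ᶠ k in atTop,
        dist ((φ ^ m) (u (σ k)).1) ((φ ^ m) (u (σ k)).2) ≤ εX := by
      filter_upwards [eventually_ge_atTop m.natAbs] with k hk
      have hle : m.natAbs ≤ ψ (σ k) := le_trans hk (le_trans hσmono.le_apply hψmono.le_apply)
      have hpos : 0 ≤ m + (ψ (σ k) : ℤ) := by
        have h1 : (m.natAbs : ℤ) ≤ (ψ (σ k) : ℤ) := by exact_mod_cast hle
        omega
      have hrw : ∀ z : X, (φ ^ m) ((φ ^ ψ (σ k)) z) = (φ ^ (m + (ψ (σ k) : ℤ)).toNat) z := by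
        intro z
        have : (φ ^ m) ((φ ^ ψ (σ k)) z) = (φ ^ (m + (ψ (σ k) : ℤ))) z := by
          rw [← zpow_natCast φ (ψ (σ k)), ← Equiv.Perm.mul_apply, ← zpow_add]
        rw [this, ← zpow_natCast φ (m + (ψ (σ k) : ℤ)).toNat, Int.toNat_of_nonneg hpos]
      simp only [hu, hrw]
      exact le_trans (h _).le (by linarith)
    have := le_of_tendsto hT hb
    exact this
  have hpq : p.1 = p.2 := hexp _ _ hkey
  have hdistT : Tendsto (fun k => dist (u (σ k)).1 (u (σ k)).2) atTop (𝓝 (dist p.1 p.2)) :=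
    ((continuous_fst.dist continuous_snd).tendsto p).comp hσlim
  have : δ ≤ dist p.1 p.2 :=
    ge_of_tendsto hdistT (Eventually.of_forall fun k => hψ (σ k))
  rw [hpq, dist_self] at this
  linarith

end Aux

lemma semiconj_pow {X Y : Type*} (φ : Equiv.Perm X) (f : Equiv.Perm Y) (π : X → Y)
    (h : ∀ x, π (φ x) = f (π x)) (n : ℕ) (x : X) : π ((φ ^ n) x) = (f ^ n) (π x) := by
  induction n generalizing x with
  | zero => simp
  | succ k ih =>
    rw [pow_succ, pow_succ, Equiv.Perm.mul_apply, Equiv.Perm.mul_apply, ih, h]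

lemma semiconj_inv {X Y : Type*} (φ : Equiv.Perm X) (f : Equiv.Perm Y) (π : X → Y)
    (h : ∀ x, π (φ x) = f (π x)) (x : X) : π (φ⁻¹ x) = f⁻¹ (π x) := by
  have := h (φ⁻¹ x)
  rw [(show ∀ (e : Equiv.Perm _) y, e (e⁻¹ y) = y from fun e => e.apply_symm_apply)] at this
  rw [this, (show ∀ (e : Equiv.Perm _) y, e⁻¹ (e y) = y from fun e => e.symm_apply_apply)]

/-- The domain `D_ε` of the bracket map. -/
def bracketDomain {X : Type*} [MetricSpace X] (φ : Equiv.Perm X) (ε : ℝ) : Set (X × X) :=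
  {p | (stableSet φ p.1 ε ∩ unstableSet φ p.2 ε).Nonempty}

/-- if `π` intertwines brackets at scale `ε_π`, `y₁, y₂` have singleton
fibers `{x₁}, {x₂}`, and for some `N` we have `f^N y₂ ∈ Y^s(f^N y₁, ε_Y/2)` and
`d(φ^N x₁, φ^N x₂) < ε_π`, then `φ^N x₂ ∈ X^s(φ^N x₁, ε_X/2)`; in particular
`x₁ ∼_s x₂`. -/
theorem close_orbits_implies_stably_equivalent
    {X Y : Type*} [MetricSpace X] [CompactSpace X] [MetricSpace Y] [CompactSpace Y]
    (φ : Equiv.Perm X) (hφ : Continuous φ) (hφ' : Continuous φ.symm)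
    (f : Equiv.Perm Y) (hf : Continuous f) (hf' : Continuous f.symm)
    (εX εY : ℝ) (hεX : 0 < εX) (hεY : 0 < εY)
    (hexpX : Expansive φ εX) (hexpY : Expansive f εY)
    (π : X → Y) (hπc : Continuous π) (hπs : Function.Surjective π)
    (hπf : ∀ x : X, π (φ x) = f (π x))
    (brX : X × X → X)
    (hbrX : ∀ p ∈ bracketDomain φ (εX / 2),
      brX p ∈ stableSet φ p.1 (εX / 2) ∩ unstableSet φ p.2 (εX / 2))
    (brY : Y × Y → Y)
    (hbrY : ∀ p ∈ bracketDomain f (εY / 2),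
      brY p ∈ stableSet f p.1 (εY / 2) ∩ unstableSet f p.2 (εY / 2))
    (επ : ℝ) (hεπ : 0 < επ)
    (hcompat : ∀ x₁ x₂ : X, dist x₁ x₂ < επ →
      (x₁, x₂) ∈ bracketDomain φ (εX / 2) ∧
      (π x₁, π x₂) ∈ bracketDomain f (εY / 2) ∧
      π (brX (x₁, x₂)) = brY (π x₁, π x₂))
    (y₁ y₂ : Y) (x₁ x₂ : X)
    (hfib₁ : π ⁻¹' {y₁} = {x₁}) (hfib₂ : π ⁻¹' {y₂} = {x₂})
    (N : ℕ)
    (hN₁ : (f ^ N) y₂ ∈ stableSet f ((f ^ N) y₁) (εY / 2))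
    (hN₂ : dist ((φ ^ N) x₁) ((φ ^ N) x₂) < επ) :
    (φ ^ N) x₂ ∈ stableSet φ ((φ ^ N) x₁) (εX / 2) ∧ StablyEq φ x₁ x₂ := by
  -- basic facts
  have hx1 : π x₁ = y₁ := by
    have : x₁ ∈ π ⁻¹' {y₁} := by rw [hfib₁]; exact rfl
    exact this
  set u₁ := (φ ^ N) x₁ with hu₁
  set u₂ := (φ ^ N) x₂ with hu₂
  obtain ⟨hd1, hd2, hd3⟩ := hcompat u₁ u₂ hN₂
  have hz := hbrX _ hd1
  have hπu₁ : π u₁ = (f ^ N) y₁ := by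
    rw [hu₁, semiconj_pow φ f π hπf, hx1]
  have hx2 : π x₂ = y₂ := by
    have : x₂ ∈ π ⁻¹' {y₂} := by rw [hfib₂]; exact rfl
    exact this
  have hπu₂ : π u₂ = (f ^ N) y₂ := by
    rw [hu₂, semiconj_pow φ f π hπf, hx2]
  have hw := hbrY _ hd2
  -- uniqueness of the bracket in Y: brY (π u₁, π u₂) = π u₂
  have hbrYeq : brY (π u₁, π u₂) = π u₂ := by
    apply hexpY
    intro m
    obtain ⟨n, rfl | rfl⟩ := m.eq_nat_or_neg
    · rw [zpow_natCast]
      have h1 : dist ((f ^ n) (π u₁)) ((f ^ n) (brY (π u₁, π u₂))) < εY / 2 := hw.1 n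
      have h2 : dist ((f ^ n) (π u₁)) ((f ^ n) (π u₂)) < εY / 2 := by
        rw [hπu₁, hπu₂]; exact hN₁ n
      calc dist ((f ^ n) (brY (π u₁, π u₂))) ((f ^ n) (π u₂))
          ≤ dist ((f ^ n) (brY (π u₁, π u₂))) ((f ^ n) (π u₁))
            + dist ((f ^ n) (π u₁)) ((f ^ n) (π u₂)) := dist_triangle _ _ _
        _ ≤ εY := by rw [dist_comm]; linarith
    · rw [zpow_neg, zpow_natCast, ← inv_pow]
      have h1 : dist ((f⁻¹ ^ n) (π u₂)) ((f⁻¹ ^ n) (brY (π u₁, π u₂))) < εY / 2 := hw.2 n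
      rw [dist_comm]; linarith
  -- the bracket in X lands in the fiber over (f ^ N) y₂, hence equals u₂
  have hπz : π (brX (u₁, u₂)) = (f ^ N) y₂ := by rw [hd3, hbrYeq, hπu₂]
  have hzeq : brX (u₁, u₂) = u₂ := by
    have ha : π ((φ⁻¹ ^ N) (brX (u₁, u₂))) = y₂ := by
      rw [semiconj_pow φ⁻¹ f⁻¹ π (semiconj_inv φ f π hπf), hπz,
        inv_pow, (show ∀ (e : Equiv.Perm _) y, e⁻¹ (e y) = y from fun e => e.symm_apply_apply)]
    have : (φ⁻¹ ^ N) (brX (u₁, u₂)) ∈ π ⁻¹' {y₂} := ha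
    rw [hfib₂] at this
    have hx : (φ⁻¹ ^ N) (brX (u₁, u₂)) = x₂ := this
    have : (φ ^ N) ((φ⁻¹ ^ N) (brX (u₁, u₂))) = (φ ^ N) x₂ := by rw [hx]
    rwa [inv_pow, (show ∀ (e : Equiv.Perm _) y, e (e⁻¹ y) = y from fun e => e.apply_symm_apply)] at this
  have part1 : u₂ ∈ stableSet φ u₁ (εX / 2) := hzeq ▸ hz.1
  refine ⟨part1, ?_⟩
  have ht := stable_tendsto φ hφ hφ' εX hεX hexpX u₁ u₂ part1
  have ht' : Tendsto (fun n : ℕ => dist ((φ ^ (n + N)) x₁) ((φ ^ (n + N)) x₂))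
      atTop (𝓝 0) := by
    refine ht.congr fun n => ?_
    rw [hu₁, hu₂, ← Equiv.Perm.mul_apply, ← Equiv.Perm.mul_apply, ← pow_add]
  exact (tendsto_add_atTop_iff_nat N).mp ht'
end

section
/- Let (Y, f) be a dynamical system and suppose there are constants λ ∈ (0,1) and η > 0 such that d(f^{-1}(w), f^{-1}(z)) ≤ λ d(w, z) whenever z ∈ Y^u(w, η). Let 0 < ε₁ ≤ η, let y₁, y₂ ∈ Y, and let γ : Y^u(y₁, ε₁) → V be a stable local conjugacy from y₁ to y₂. Then for every n ≥ 0: (i) f^{-n}(Y^u(fⁿ(y₁), ε₁)) ⊆ Y^u(y₁, ε₁); and (ii) fⁿ ∘ γ ∘ f^{-n} : Y^u(fⁿ(y₁), ε₁) → fⁿ(V) is a stable local conjugacy from fⁿ(y₁) to fⁿ(y₂). -/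
open Filter Topology Set

/-- A stable local conjugacy from `y₁` to `y₂` defined on a set `U ⊆ Y^u(y₁)`
(typically a local unstable set of `y₁`): a homeomorphism onto its image, landing
in the unstable class of `y₂`, sending `y₁` to `y₂`, with
`sup_{z ∈ U} d(fⁿ z, fⁿ (γ z)) → 0` as `n → ∞`. -/
def IsStableLocalConjugacyOn {Y : Type*} [MetricSpace Y] (f : Equiv.Perm Y)
    (y₁ y₂ : Y) (U : Set Y) (γ : Y → Y) : Prop :=
  y₁ ∈ U ∧ γ y₁ = y₂ ∧
  (∀ z ∈ U, UnstablyEq f y₂ (γ z)) ∧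
  Set.InjOn γ U ∧ ContinuousOn γ U ∧
  (∃ γ' : Y → Y, ContinuousOn γ' (γ '' U) ∧ ∀ z ∈ U, γ' (γ z) = z) ∧
  (∀ ε : ℝ, 0 < ε → ∃ N : ℕ, ∀ n : ℕ, N ≤ n →
    ∀ z ∈ U, dist ((f ^ n) z) ((f ^ n) (γ z)) < ε)



private lemma perm_inv_pow_apply_pow {Y : Type*} (f : Equiv.Perm Y) (n : ℕ) (x : Y) :
    (f⁻¹ ^ n) ((f ^ n) x) = x := by
  rw [inv_pow]
  exact Equiv.symm_apply_apply _ x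

private lemma perm_pow_apply_inv_pow {Y : Type*} (f : Equiv.Perm Y) (n : ℕ) (x : Y) :
    (f ^ n) ((f⁻¹ ^ n) x) = x := by
  rw [inv_pow]
  exact Equiv.apply_symm_apply _ x

private lemma cont_perm_pow_s10 {Y : Type*} [TopologicalSpace Y] (f : Equiv.Perm Y)
    (hf : Continuous f) (n : ℕ) : Continuous ⇑(f ^ n) := by
  induction n with
  | zero => simpa using continuous_id
  | succ k ih =>
    have h : ⇑(f ^ (k + 1)) = ⇑(f ^ k) ∘ ⇑f := by
      ext x; simp [pow_succ, Equiv.Perm.mul_apply]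
    rw [h]; exact ih.comp hf

private lemma inv_pow_mem_unstable {Y : Type*} [MetricSpace Y] (f : Equiv.Perm Y)
    (w : Y) (ε : ℝ) (n : ℕ) {z : Y} (hz : z ∈ unstableSet f ((f ^ n) w) ε) :
    (f⁻¹ ^ n) z ∈ unstableSet f w ε := by
  intro m
  have h := hz (m + n)
  rwa [pow_add, Equiv.Perm.mul_apply, Equiv.Perm.mul_apply, perm_inv_pow_apply_pow] at h

private lemma unstablyEq_pow {Y : Type*} [MetricSpace Y] (f : Equiv.Perm Y)
    {a b : Y} (n : ℕ) (h : UnstablyEq f a b) : UnstablyEq f ((f ^ n) a) ((f ^ n) b) := by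
  have h2 : Tendsto (fun m : ℕ => dist ((f⁻¹ ^ (m - n)) a) ((f⁻¹ ^ (m - n)) b)) atTop (𝓝 0) :=
    h.comp (tendsto_sub_atTop_nat n)
  refine h2.congr' ?_
  filter_upwards [eventually_ge_atTop n] with m hm
  have hmn : m - n + n = m := Nat.sub_add_cancel hm
  have key : ∀ x : Y, (f⁻¹ ^ m) ((f ^ n) x) = (f⁻¹ ^ (m - n)) x := by
    intro x
    conv_lhs => rw [← hmn]
    rw [pow_add, Equiv.Perm.mul_apply, perm_inv_pow_apply_pow]
  rw [key a, key b]

/-- iterating a stable local conjugacy. For every `n ≥ 0`,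
`f^{-n}(Y^u(fⁿ y₁, ε₁)) ⊆ Y^u(y₁, ε₁)` and `fⁿ ∘ γ ∘ f^{-n}` is a stable local
conjugacy from `fⁿ y₁` to `fⁿ y₂` on `Y^u(fⁿ y₁, ε₁)`. -/
theorem iterate_stable_local_conjugacy
    {Y : Type*} [MetricSpace Y] [CompactSpace Y]
    (f : Equiv.Perm Y) (hf : Continuous f) (hf' : Continuous f.symm)
    (lam η : ℝ) (hlam₀ : 0 < lam) (hlam₁ : lam < 1) (hη : 0 < η)
    (hcontr : ∀ w z : Y, z ∈ unstableSet f w η → dist (f⁻¹ w) (f⁻¹ z) ≤ lam * dist w z)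
    (ε₁ : ℝ) (hε₁ : 0 < ε₁) (hε₁η : ε₁ ≤ η)
    (y₁ y₂ : Y) (γ : Y → Y)
    (hγ : IsStableLocalConjugacyOn f y₁ y₂ (unstableSet f y₁ ε₁) γ) :
    ∀ n : ℕ,
      (⇑(f⁻¹ ^ n) '' unstableSet f ((f ^ n) y₁) ε₁ ⊆ unstableSet f y₁ ε₁) ∧
      IsStableLocalConjugacyOn f ((f ^ n) y₁) ((f ^ n) y₂)
        (unstableSet f ((f ^ n) y₁) ε₁) (⇑(f ^ n) ∘ γ ∘ ⇑(f⁻¹ ^ n)) := by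
  intro n
  obtain ⟨hy₁U, hγy₁, hunst, hinj, hcont, ⟨γ', hγ'cont, hγ'inv⟩, hconv⟩ := hγ
  have hmaps : ∀ z ∈ unstableSet f ((f ^ n) y₁) ε₁, (f⁻¹ ^ n) z ∈ unstableSet f y₁ ε₁ :=
    fun z hz => inv_pow_mem_unstable f y₁ ε₁ n hz
  have hcontpow : Continuous ⇑(f ^ n) := cont_perm_pow_s10 f hf n
  have hfinv : Continuous ⇑(f⁻¹ : Equiv.Perm Y) := by
    have : (⇑(f⁻¹ : Equiv.Perm Y)) = ⇑f.symm := rfl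
    rw [this]; exact hf'
  have hcontinvpow : Continuous ⇑(f⁻¹ ^ n) := cont_perm_pow_s10 f⁻¹ hfinv n
  constructor
  · rintro _ ⟨z, hz, rfl⟩
    exact hmaps z hz
  refine ⟨?_, ?_, ?_, ?_, ?_, ?_, ?_⟩
  · intro m
    simpa using hε₁
  · simp only [Function.comp_apply, perm_inv_pow_apply_pow, hγy₁]
  · intro z hz
    exact unstablyEq_pow f n (hunst _ (hmaps z hz))
  · intro a ha b hb hab
    have h1 : γ ((f⁻¹ ^ n) a) = γ ((f⁻¹ ^ n) b) := (f ^ n).injective hab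
    have h2 : (f⁻¹ ^ n) a = (f⁻¹ ^ n) b := hinj (hmaps a ha) (hmaps b hb) h1
    exact (f⁻¹ ^ n).injective h2
  · exact hcontpow.comp_continuousOn (hcont.comp hcontinvpow.continuousOn hmaps)
  · refine ⟨⇑(f ^ n) ∘ γ' ∘ ⇑(f⁻¹ ^ n), ?_, ?_⟩
    · have hmaps2 : Set.MapsTo ⇑(f⁻¹ ^ n)
          ((⇑(f ^ n) ∘ γ ∘ ⇑(f⁻¹ ^ n)) '' unstableSet f ((f ^ n) y₁) ε₁)
          (γ '' unstableSet f y₁ ε₁) := by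
        rintro _ ⟨z, hz, rfl⟩
        simp only [Function.comp_apply, perm_inv_pow_apply_pow]
        exact ⟨(f⁻¹ ^ n) z, hmaps z hz, rfl⟩
      exact hcontpow.comp_continuousOn (hγ'cont.comp hcontinvpow.continuousOn hmaps2)
    · intro z hz
      simp only [Function.comp_apply, perm_inv_pow_apply_pow,
        hγ'inv _ (hmaps z hz), perm_pow_apply_inv_pow]
  · intro ε hε
    obtain ⟨N, hN⟩ := hconv ε hε
    refine ⟨N, fun m hm z hz => ?_⟩
    have hw := hmaps z hz
    have h1 := hN (m + n) (hm.trans (Nat.le_add_right m n)) _ hw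
    have key : ∀ x : Y, (f ^ (m + n)) x = (f ^ m) ((f ^ n) x) := fun x => by
      rw [pow_add, Equiv.Perm.mul_apply]
    rw [key, key, perm_pow_apply_inv_pow] at h1
    simpa using h1
end
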